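/- Let λ > 0, K > 0, and f : ℝ → ℝ be differentiable with |f'(s)| ≤ K e^{−λ(T − s)} for all s ∈ [0, T], where T = L h, t_l = l h, h > 0, L ∈ ℕ. Then |h ∑_{l=1}^{L} f(t_l) − ∫₀^{T} f(s) ds| ≤ K h² ∑_{l=1}^{L} e^{−λ(T − t_l)} ≤ C h, where C > 0 depends only on K and λ (not on T, L, or h ≤ 1). -/

import Mathlib

/-!
On the cell `[(l - 1) h, l h]` the error of the right-endpoint rule is at most `h²` times the
sup of `|f'|` over the cell, which by the decay hypothesis is `K e^{-λ (T - l h)}`. Summing over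
the cells gives the first inequality. The weights form the geometric series `∑ (e^{-λh})^j`, so
`h ∑ ≤ h / (1 - e^{-λh}) ≤ e^{λh} / λ`, which for `h ≤ 1` is bounded independently of `T`
and `L`.
-/

open Finset Real

lemma abs_sub_mul_integral_le_of_abs_deriv_le {f : ℝ → ℝ} {a b M : ℝ} (hab : a ≤ b)
    (hf : ∀ x ∈ Set.Icc a b, DifferentiableAt ℝ f x)
    (hM : ∀ x ∈ Set.Icc a b, |deriv f x| ≤ M) :
    |(b - a) * f b - ∫ x in a..b, f x| ≤ M * (b - a) ^ 2 := by
  have hcont : ContinuousOn f (Set.Icc a b) := fun x hx =>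
    (hf x hx).continuousAt.continuousWithinAt
  have hrewrite : (b - a) * f b - ∫ x in a..b, f x = ∫ x in a..b, (f b - f x) := by
    rw [intervalIntegral.integral_sub intervalIntegrable_const
      (hcont.intervalIntegrable_of_Icc hab), intervalIntegral.integral_const, smul_eq_mul]
  have hpointwise : ∀ x ∈ Set.uIoc a b, ‖f b - f x‖ ≤ M * (b - a) := by
    intro x hx
    rw [Set.uIoc_of_le hab] at hx
    calc ‖f b - f x‖ ≤ M * ‖b - x‖ :=
          (convex_Icc a b).norm_image_sub_le_of_norm_deriv_le hf hM
            ⟨hx.1.le, hx.2⟩ ⟨hab, le_rfl⟩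
      _ ≤ M * (b - a) := by
          have hM0 : 0 ≤ M := (abs_nonneg _).trans (hM b ⟨hab, le_rfl⟩)
          rw [Real.norm_of_nonneg (sub_nonneg.2 hx.2)]
          exact mul_le_mul_of_nonneg_left (by linarith [hx.1]) hM0
  calc |(b - a) * f b - ∫ x in a..b, f x|
      ≤ M * (b - a) * |b - a| :=
        hrewrite ▸ intervalIntegral.norm_integral_le_of_norm_le_const hpointwise
    _ = M * (b - a) ^ 2 := by rw [abs_of_nonneg (sub_nonneg.2 hab)]; ring

lemma mul_sum_sub_integral_eq_sum_sub_integral {f : ℝ → ℝ} (hf : Continuous f) (h : ℝ)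
    (L : ℕ) :
    h * ∑ l ∈ Icc 1 L, f (l * h) - ∫ s in (0 : ℝ)..L * h, f s =
      ∑ l ∈ Icc 1 L, (h * f (l * h) - ∫ s in ((l : ℝ) - 1) * h..l * h, f s) := by
  induction L with
  | zero => simp
  | succ L ih =>
    rw [sum_Icc_succ_top (Nat.le_add_left 1 L), sum_Icc_succ_top (Nat.le_add_left 1 L), ← ih,
      ← intervalIntegral.integral_add_adjacent_intervals (b := (L : ℝ) * h)
        (hf.intervalIntegrable _ _) (hf.intervalIntegrable _ _)]
    push_cast
    ring_nf

lemma sum_Icc_pow_sub_le {r : ℝ} (hr0 : 0 ≤ r) (hr1 : r < 1) (L : ℕ) :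
    ∑ l ∈ Icc 1 L, r ^ (L - l) ≤ 1 / (1 - r) := by
  rw [← Ico_add_one_right_eq_Icc, sum_Ico_reflect _ _ le_rfl]
  simpa using geom_sum_Ico_le_of_lt_one (m := 0) (n := L) hr0 hr1

lemma div_one_sub_exp_neg_le_exp {x : ℝ} (hx : 0 < x) : x / (1 - exp (-x)) ≤ exp x := by
  have hpos : 0 < 1 - exp (-x) := by simpa using exp_lt_one_iff.2 (neg_lt_zero.2 hx)
  rw [div_le_iff₀ hpos, mul_sub, mul_one, ← exp_add, add_neg_cancel, exp_zero]
  linarith [add_one_le_exp x]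

lemma mul_sum_exp_neg_grid_le {lam h : ℝ} (hlam : 0 < lam) (hh : 0 < h) (L : ℕ) :
    h * ∑ l ∈ Icc 1 L, exp (-lam * (L * h - l * h)) ≤ exp (lam * h) / lam := by
  set r := exp (-(lam * h))
  have hr1 : r < 1 := exp_lt_one_iff.2 (by simp; positivity)
  have hterm : ∀ l ∈ Icc 1 L, exp (-lam * (L * h - l * h)) = r ^ (L - l) := by
    intro l hl
    rw [← exp_nat_mul, Nat.cast_sub (mem_Icc.1 hl).2]
    ring_nf
  rw [sum_congr rfl hterm]
  calc h * ∑ l ∈ Icc 1 L, r ^ (L - l)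
      ≤ h * (1 / (1 - r)) :=
        mul_le_mul_of_nonneg_left (sum_Icc_pow_sub_le (exp_nonneg _) hr1 L) hh.le
    _ = (lam * h / (1 - r)) / lam := by field_simp
    _ ≤ exp (lam * h) / lam :=
        div_le_div_of_nonneg_right (div_one_sub_exp_neg_le_exp (by positivity)) hlam.le

lemma abs_mul_sum_sub_integral_le_of_abs_deriv_le_exp {f : ℝ → ℝ} (hf : Differentiable ℝ f)
    {K lam h : ℝ} (hK : 0 ≤ K) (hlam : 0 ≤ lam) (hh : 0 ≤ h) (L : ℕ)
    (hdecay : ∀ s ∈ Set.Icc (0 : ℝ) (L * h), |deriv f s| ≤ K * exp (-lam * (L * h - s))) :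
    |h * ∑ l ∈ Icc 1 L, f (l * h) - ∫ s in (0 : ℝ)..L * h, f s| ≤
      K * h ^ 2 * ∑ l ∈ Icc 1 L, exp (-lam * (L * h - l * h)) := by
  have hcell : ∀ l ∈ Icc 1 L, |h * f (l * h) - ∫ s in ((l : ℝ) - 1) * h..l * h, f s| ≤
      K * h ^ 2 * exp (-lam * (L * h - l * h)) := by
    intro l hl
    have hl1 : (1 : ℝ) ≤ l := by exact_mod_cast (mem_Icc.1 hl).1
    have hlL : (l : ℝ) * h ≤ L * h := by gcongr; exact_mod_cast (mem_Icc.1 hl).2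
    have hderiv : ∀ s ∈ Set.Icc (((l : ℝ) - 1) * h) (l * h),
        |deriv f s| ≤ K * exp (-lam * (L * h - l * h)) := fun s hs =>
      (hdecay s ⟨by nlinarith [hs.1], hs.2.trans hlL⟩).trans <|
        mul_le_mul_of_nonneg_left (exp_le_exp.2 (by nlinarith [hs.2])) hK
    have hlen : (l : ℝ) * h - (l - 1) * h = h := by ring
    have := abs_sub_mul_integral_le_of_abs_deriv_le (by nlinarith) (fun x _ => hf x) hderiv
    rw [hlen] at this
    linarith
  rw [mul_sum_sub_integral_eq_sum_sub_integral hf.continuous, mul_sum]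
  exact (abs_sum_le_sum_abs _ _).trans (sum_le_sum hcell)

theorem stmt8 (K lam : ℝ) (hK : 0 < K) (hlam : 0 < lam) :
    ∃ C : ℝ, 0 < C ∧ ∀ (h : ℝ) (L : ℕ) (T : ℝ) (f : ℝ → ℝ),
      0 < h → h ≤ 1 → T = L * h → Differentiable ℝ f →
      (∀ s ∈ Set.Icc (0 : ℝ) T, |deriv f s| ≤ K * Real.exp (-lam * (T - s))) →
      |h * ∑ l ∈ Finset.Icc 1 L, f (l * h) - ∫ s in (0:ℝ)..T, f s| ≤
          K * h ^ 2 * ∑ l ∈ Finset.Icc 1 L, Real.exp (-lam * (T - l * h)) ∧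
      K * h ^ 2 * ∑ l ∈ Finset.Icc 1 L, Real.exp (-lam * (T - l * h)) ≤ C * h := by
  refine ⟨K * exp lam / lam, by positivity, fun h L T f hh hh1 hT hf hdecay => ?_⟩
  subst hT
  refine ⟨abs_mul_sum_sub_integral_le_of_abs_deriv_le_exp hf hK.le hlam.le hh.le L hdecay, ?_⟩
  calc K * h ^ 2 * ∑ l ∈ Icc 1 L, exp (-lam * (L * h - l * h))
      = K * h * (h * ∑ l ∈ Icc 1 L, exp (-lam * (L * h - l * h))) := by ring
    _ ≤ K * h * (exp (lam * h) / lam) := by gcongr; exact mul_sum_exp_neg_grid_le hlam hh L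
    _ ≤ K * h * (exp lam / lam) := by gcongr; exact mul_le_of_le_one_right hlam.le hh1
    _ = K * exp lam / lam * h := by ring
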